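/- Suppose f : [a,b]×[c,d] → ℝ (with a<b, c<d) is convex on the co-ordinates on [a,b]×[c,d] and integrable. Then the following chain of inequalities holds: f((a+b)/2, (c+d)/2) ≤ (1/2)[ (1/(b−a)) ∫_a^b f(x,(c+d)/2) dx + (1/(d−c)) ∫_c^d f((a+b)/2, y) dy ] ≤ (1/((b−a)(d−c))) ∫_a^b ∫_c^d f(x,y) dx dy ≤ (1/4)[ (1/(b−a)) ∫_a^b f(x,c) dx + (1/(b−a)) ∫_a^b f(x,d) dx + (1/(d−c)) ∫_c^d f(a,y) dy + (1/(d−c)) ∫_c^d f(b,y) dy ] ≤ (f(a,c)+f(a,d)+f(b,c)+f(b,d))/4. -/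

import Mathlib

open MeasureTheory Set

/-!
The reflection `x ↦ a + b - x` preserves `∫ x in a..b`, so `∫ g` equals the integral of
`(g x + g (a + b - x)) / 2`, and convexity squeezes this integrand between `g ((a + b) / 2)` and
`(g a + g b) / 2`: the one-dimensional Hermite–Hadamard inequalities. The outer links of the chain
apply them to the midpoint and edge slices; the inner links apply them to every slice in one
variable and integrate in the other, Fubini supplying the version with the roles swapped.
-/

section OneDim

variable {a b x : ℝ} {g : ℝ → ℝ}

theorem ConvexOn.map_midpoint_le_reflect (hg : ConvexOn ℝ (Icc a b) g) (hx : x ∈ Icc a b) :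
    g ((a + b) / 2) ≤ (g x + g (a + b - x)) / 2 := by
  have hx' : a + b - x ∈ Icc a b := ⟨by linarith [hx.2], by linarith [hx.1]⟩
  have h := hg.2 hx hx' (by norm_num : (0 : ℝ) ≤ 1 / 2) (by norm_num : (0 : ℝ) ≤ 1 / 2)
    (by norm_num)
  rw [show (1 / 2 : ℝ) • x + (1 / 2 : ℝ) • (a + b - x) = (a + b) / 2 by
    simp only [smul_eq_mul]; ring] at h
  simp only [smul_eq_mul] at h
  linarith

theorem ConvexOn.add_map_reflect_le (hg : ConvexOn ℝ (Icc a b) g) (hx : x ∈ Icc a b) :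
    g x + g (a + b - x) ≤ g a + g b := by
  have hab : a ≤ b := hx.1.trans hx.2
  rw [← segment_eq_Icc hab] at hx
  obtain ⟨s, t, hs, ht, hst, rfl⟩ := hx
  have hreflect : a + b - (s • a + t • b) = t • a + s • b := by
    simp only [smul_eq_mul]; linear_combination (-(a + b)) * hst
  have ha := left_mem_Icc.2 hab
  have hb := right_mem_Icc.2 hab
  have h₁ := hg.2 ha hb hs ht hst
  have h₂ := hg.2 ha hb ht hs (by linarith)
  rw [hreflect]
  simp only [smul_eq_mul] at h₁ h₂ ⊢
  linear_combination h₁ + h₂ + (g a + g b) * hst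

theorem ConvexOn.integrableOn_Icc (hg : ConvexOn ℝ (Icc a b) g) : IntegrableOn g (Icc a b) := by
  rcases lt_or_ge b a with hba | hab
  · simp [Icc_eq_empty_of_lt hba]
  set M := max (g a) (g b)
  have hle : ∀ x ∈ Icc a b, g x ≤ M := fun x hx =>
    hg.le_on_segment (left_mem_Icc.2 hab) (right_mem_Icc.2 hab) (by rwa [segment_eq_Icc hab])
  have hge : ∀ x ∈ Icc a b, 2 * g ((a + b) / 2) - M ≤ g x := fun x hx => by
    have hx' : a + b - x ∈ Icc a b := ⟨by linarith [hx.2], by linarith [hx.1]⟩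
    linarith [hg.map_midpoint_le_reflect hx, hle _ hx']
  have hmeas : AEStronglyMeasurable g (volume.restrict (Icc a b)) := by
    rw [← Measure.restrict_congr_set Ioo_ae_eq_Icc, ← interior_Icc]
    exact hg.continuousOn_interior.aestronglyMeasurable isOpen_interior.measurableSet
  refine IntegrableOn.of_bound measure_Icc_lt_top hmeas (max |2 * g ((a + b) / 2) - M| |M|) ?_
  filter_upwards [ae_restrict_mem measurableSet_Icc] with x hx
  exact abs_le_max_abs_abs (hge x hx) (hle x hx)

theorem ConvexOn.intervalIntegrable (hg : ConvexOn ℝ (Icc a b) g) (hab : a ≤ b) :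
    IntervalIntegrable g volume a b :=
  (intervalIntegrable_iff_integrableOn_Icc_of_le hab).2 hg.integrableOn_Icc

theorem IntervalIntegrable.comp_add_sub (hg : IntervalIntegrable g volume a b) :
    IntervalIntegrable (fun x => g (a + b - x)) volume a b := by
  simpa using (hg.comp_sub_left (a + b)).symm

theorem IntervalIntegrable.symmetrize (hg : IntervalIntegrable g volume a b) :
    IntervalIntegrable (fun x => (g x + g (a + b - x)) / 2) volume a b :=
  (hg.add hg.comp_add_sub).div_const 2

theorem intervalIntegral.integral_symmetrize (hg : IntervalIntegrable g volume a b) :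
    ∫ x in a..b, (g x + g (a + b - x)) / 2 = ∫ x in a..b, g x := by
  have hreflect : ∫ x in a..b, g (a + b - x) = ∫ x in a..b, g x := by
    simp [intervalIntegral.integral_comp_sub_left]
  rw [intervalIntegral.integral_div, intervalIntegral.integral_add hg hg.comp_add_sub, hreflect]
  ring

theorem ConvexOn.map_midpoint_le_average (hg : ConvexOn ℝ (Icc a b) g) (hab : a < b) :
    g ((a + b) / 2) ≤ (b - a)⁻¹ * ∫ x in a..b, g x := by
  have hgi := hg.intervalIntegrable hab.le
  have h : ∫ _ in a..b, g ((a + b) / 2) ≤ ∫ x in a..b, (g x + g (a + b - x)) / 2 :=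
    intervalIntegral.integral_mono_on hab.le intervalIntegrable_const
      hgi.symmetrize fun x hx => hg.map_midpoint_le_reflect hx
  rw [intervalIntegral.integral_const, smul_eq_mul, intervalIntegral.integral_symmetrize hgi] at h
  rwa [le_inv_mul_iff₀ (sub_pos.2 hab)]

theorem ConvexOn.average_le_add_div_two (hg : ConvexOn ℝ (Icc a b) g) (hab : a < b) :
    (b - a)⁻¹ * ∫ x in a..b, g x ≤ (g a + g b) / 2 := by
  have hgi := hg.intervalIntegrable hab.le
  have h : ∫ x in a..b, (g x + g (a + b - x)) / 2 ≤ ∫ _ in a..b, (g a + g b) / 2 :=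
    intervalIntegral.integral_mono_on hab.le hgi.symmetrize intervalIntegrable_const
      fun x hx => by linarith [hg.add_map_reflect_le hx]
  rw [intervalIntegral.integral_const, smul_eq_mul, intervalIntegral.integral_symmetrize hgi] at h
  rwa [inv_mul_le_iff₀ (sub_pos.2 hab)]

end OneDim

section TwoDim

variable {a b c d : ℝ} {f : ℝ → ℝ → ℝ}

theorem MeasureTheory.IntegrableOn.integrable_prod_restrict_Ioc
    (hf : IntegrableOn (fun p : ℝ × ℝ => f p.1 p.2) (Icc a b ×ˢ Icc c d)) :
    Integrable (fun p : ℝ × ℝ => f p.1 p.2)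
      ((volume.restrict (Ioc a b)).prod (volume.restrict (Ioc c d))) := by
  rw [Measure.prod_restrict, ← Measure.volume_eq_prod]
  exact hf.mono_set (prod_mono Ioc_subset_Icc_self Ioc_subset_Icc_self)

theorem MeasureTheory.IntegrableOn.intervalIntegrable_intervalIntegral_snd (hab : a ≤ b)
    (hcd : c ≤ d) (hf : IntegrableOn (fun p : ℝ × ℝ => f p.1 p.2) (Icc a b ×ˢ Icc c d)) :
    IntervalIntegrable (fun x => ∫ y in c..d, f x y) volume a b := by
  simp_rw [intervalIntegrable_iff_integrableOn_Ioc_of_le hab, intervalIntegral.integral_of_le hcd]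
  exact hf.integrable_prod_restrict_Ioc.integral_prod_left

theorem MeasureTheory.IntegrableOn.intervalIntegral_swap (hab : a ≤ b) (hcd : c ≤ d)
    (hf : IntegrableOn (fun p : ℝ × ℝ => f p.1 p.2) (Icc a b ×ˢ Icc c d)) :
    ∫ x in a..b, ∫ y in c..d, f x y = ∫ y in c..d, ∫ x in a..b, f x y := by
  simp_rw [intervalIntegral.integral_of_le hab, intervalIntegral.integral_of_le hcd]
  exact integral_integral_swap hf.integrable_prod_restrict_Ioc

theorem average_midSlice_le_average_prod (hab : a < b) (hcd : c < d)
    (hconv : ∀ x ∈ Icc a b, ConvexOn ℝ (Icc c d) (f x))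
    (hmid : IntervalIntegrable (fun x => f x ((c + d) / 2)) volume a b)
    (hf : IntegrableOn (fun p : ℝ × ℝ => f p.1 p.2) (Icc a b ×ˢ Icc c d)) :
    (b - a)⁻¹ * ∫ x in a..b, f x ((c + d) / 2)
      ≤ ((b - a) * (d - c))⁻¹ * ∫ x in a..b, ∫ y in c..d, f x y := by
  rw [mul_inv, mul_assoc, ← intervalIntegral.integral_const_mul (d - c)⁻¹]
  refine mul_le_mul_of_nonneg_left ?_ (inv_nonneg.2 (sub_nonneg.2 hab.le))
  exact intervalIntegral.integral_mono_on hab.le hmid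
    ((hf.intervalIntegrable_intervalIntegral_snd hab.le hcd.le).const_mul _)
    fun x hx => (hconv x hx).map_midpoint_le_average hcd

theorem average_prod_le_average_edgeSlices (hab : a < b) (hcd : c < d)
    (hconv : ∀ x ∈ Icc a b, ConvexOn ℝ (Icc c d) (f x))
    (hc : IntervalIntegrable (fun x => f x c) volume a b)
    (hd : IntervalIntegrable (fun x => f x d) volume a b)
    (hf : IntegrableOn (fun p : ℝ × ℝ => f p.1 p.2) (Icc a b ×ˢ Icc c d)) :
    ((b - a) * (d - c))⁻¹ * ∫ x in a..b, ∫ y in c..d, f x y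
      ≤ ((b - a)⁻¹ * (∫ x in a..b, f x c) + (b - a)⁻¹ * (∫ x in a..b, f x d)) / 2 := by
  calc ((b - a) * (d - c))⁻¹ * ∫ x in a..b, ∫ y in c..d, f x y
      = (b - a)⁻¹ * ∫ x in a..b, (d - c)⁻¹ * ∫ y in c..d, f x y := by
        rw [mul_inv, mul_assoc, ← intervalIntegral.integral_const_mul (d - c)⁻¹]
    _ ≤ (b - a)⁻¹ * ∫ x in a..b, (f x c + f x d) / 2 := by
        refine mul_le_mul_of_nonneg_left ?_ (inv_nonneg.2 (sub_nonneg.2 hab.le))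
        exact intervalIntegral.integral_mono_on hab.le
          ((hf.intervalIntegrable_intervalIntegral_snd hab.le hcd.le).const_mul _)
          ((hc.add hd).div_const 2) fun x hx => (hconv x hx).average_le_add_div_two hcd
    _ = ((b - a)⁻¹ * (∫ x in a..b, f x c) + (b - a)⁻¹ * (∫ x in a..b, f x d)) / 2 := by
        rw [intervalIntegral.integral_div, intervalIntegral.integral_add hc hd]
        ring

end TwoDim

theorem hadamard_coord_chain (a b c d : ℝ) (hab : a < b) (hcd : c < d)
    (f : ℝ → ℝ → ℝ)
    (hconvY : ∀ y₀ ∈ Set.Icc c d, ConvexOn ℝ (Set.Icc a b) (fun u => f u y₀))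
    (hconvX : ∀ x₀ ∈ Set.Icc a b, ConvexOn ℝ (Set.Icc c d) (fun v => f x₀ v))
    (hint : MeasureTheory.IntegrableOn (fun p : ℝ × ℝ => f p.1 p.2) (Set.Icc a b ×ˢ Set.Icc c d)) :
    f ((a+b)/2) ((c+d)/2)
      ≤ (1/2) * (1/(b-a) * (∫ x in a..b, f x ((c+d)/2)) + 1/(d-c) * (∫ y in c..d, f ((a+b)/2) y))
    ∧ (1/2) * (1/(b-a) * (∫ x in a..b, f x ((c+d)/2)) + 1/(d-c) * (∫ y in c..d, f ((a+b)/2) y))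
      ≤ 1/((b-a)*(d-c)) * (∫ x in a..b, ∫ y in c..d, f x y)
    ∧ 1/((b-a)*(d-c)) * (∫ x in a..b, ∫ y in c..d, f x y)
      ≤ (1/4) * (1/(b-a) * (∫ x in a..b, f x c) + 1/(b-a) * (∫ x in a..b, f x d)
          + 1/(d-c) * (∫ y in c..d, f a y) + 1/(d-c) * (∫ y in c..d, f b y))
    ∧ (1/4) * (1/(b-a) * (∫ x in a..b, f x c) + 1/(b-a) * (∫ x in a..b, f x d)
          + 1/(d-c) * (∫ y in c..d, f a y) + 1/(d-c) * (∫ y in c..d, f b y))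
      ≤ (f a c + f a d + f b c + f b d)/4 := by
  have hmx : (a + b) / 2 ∈ Icc a b := ⟨by linarith, by linarith⟩
  have hmy : (c + d) / 2 ∈ Icc c d := ⟨by linarith, by linarith⟩
  have ha := left_mem_Icc.2 hab.le
  have hb := right_mem_Icc.2 hab.le
  have hc := left_mem_Icc.2 hcd.le
  have hd := right_mem_Icc.2 hcd.le
  have sliceX : ∀ y ∈ Icc c d, IntervalIntegrable (fun x => f x y) volume a b :=
    fun y hy => (hconvY y hy).intervalIntegrable hab.le
  have sliceY : ∀ x ∈ Icc a b, IntervalIntegrable (f x) volume c d :=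
    fun x hx => (hconvX x hx).intervalIntegrable hcd.le
  have hint' : IntegrableOn (fun p : ℝ × ℝ => f p.2 p.1) (Icc c d ×ˢ Icc a b) := hint.swap
  have M₁ := average_midSlice_le_average_prod hab hcd hconvX (sliceX _ hmy) hint
  have M₂ := average_midSlice_le_average_prod hcd hab hconvY (sliceY _ hmx) hint'
  have M₃ := average_prod_le_average_edgeSlices hab hcd hconvX (sliceX _ hc) (sliceX _ hd) hint
  have M₄ := average_prod_le_average_edgeSlices hcd hab hconvY (sliceY _ ha) (sliceY _ hb) hint'
  rw [mul_comm (d - c), ← hint.intervalIntegral_swap hab.le hcd.le] at M₂ M₄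
  have L₁ := (hconvY _ hmy).map_midpoint_le_average hab
  have L₂ := (hconvX _ hmx).map_midpoint_le_average hcd
  have R₁ := (hconvY _ hc).average_le_add_div_two hab
  have R₂ := (hconvY _ hd).average_le_add_div_two hab
  have R₃ := (hconvX _ ha).average_le_add_div_two hcd
  have R₄ := (hconvX _ hb).average_le_add_div_two hcd
  simp only [one_div]
  exact ⟨by linarith, by linarith, by linarith, by linarith⟩
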